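/- arXiv:0909.5137 — 9 statements merged into one kernel-verified Lean document; each statement's English description precedes it below -/
import Mathlib

section
/- Let α, β, γ, δ be functions from the power set of [n] to the non-negative reals satisfying α(A)β(B) ≤ γ(A ∪ B)δ(A ∩ B) for every A, B ⊆ [n]. Then for any families 𝒜, ℬ of subsets of [n], (∑_{A∈𝒜} α(A))(∑_{B∈ℬ} β(B)) ≤ (∑_{C∈𝒜∨ℬ} γ(C))(∑_{D∈𝒜∧ℬ} δ(D)), where 𝒜∨ℬ = {A∪B : A∈𝒜, B∈ℬ} and 𝒜∧ℬ = {A∩B : A∈𝒜, B∈ℬ}. -/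
open scoped FinsetFamily

/-- The four functions theorem of Ahlswede and Daykin. -/
theorem four_functions_theorem_boolean (n : ℕ) (α β γ δ : Finset (Fin n) → ℝ)
    (hα : ∀ A, 0 ≤ α A) (hβ : ∀ A, 0 ≤ β A) (hγ : ∀ A, 0 ≤ γ A) (hδ : ∀ A, 0 ≤ δ A)
    (h : ∀ A B : Finset (Fin n), α A * β B ≤ γ (A ∪ B) * δ (A ∩ B))
    (𝒜 ℬ : Finset (Finset (Fin n))) :
    (∑ A ∈ 𝒜, α A) * (∑ B ∈ ℬ, β B) ≤
      (∑ C ∈ 𝒜 ⊻ ℬ, γ C) * (∑ D ∈ 𝒜 ⊼ ℬ, δ D) := by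
  rw [mul_comm (∑ C ∈ 𝒜 ⊻ ℬ, γ C)]
  exact four_functions_theorem α β δ γ hα hβ hδ hγ
    (fun a b => by simpa [mul_comm] using h a b) 𝒜 ℬ
end

section
/- Let L be a finite distributive lattice and let α, β, γ, δ : L → ℝ≥0 satisfy α(x)β(y) ≤ γ(x ∨ y)δ(x ∧ y) for every x, y ∈ L. Then for every X, Y ⊆ L, (∑_{x∈X} α(x))(∑_{y∈Y} β(y)) ≤ (∑_{z∈X∨Y} γ(z))(∑_{w∈X∧Y} δ(w)), where X∨Y = {x∨y : x∈X, y∈Y} and X∧Y = {x∧y : x∈X, y∈Y}. -/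
open scoped FinsetFamily

/-- The four functions theorem on a finite distributive lattice. -/
theorem four_functions_theorem_lattice (L : Type*) [DistribLattice L] [Fintype L]
    [DecidableEq L] (α β γ δ : L → ℝ)
    (hα : ∀ x, 0 ≤ α x) (hβ : ∀ x, 0 ≤ β x) (hγ : ∀ x, 0 ≤ γ x) (hδ : ∀ x, 0 ≤ δ x)
    (h : ∀ x y : L, α x * β y ≤ γ (x ⊔ y) * δ (x ⊓ y))
    (X Y : Finset L) :
    (∑ x ∈ X, α x) * (∑ y ∈ Y, β y) ≤
      (∑ z ∈ X ⊻ Y, γ z) * (∑ w ∈ X ⊼ Y, δ w) := by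
  rw [mul_comm (∑ z ∈ X ⊻ Y, γ z)]
  exact four_functions_theorem α β δ γ hα hβ hδ hγ
    (fun a b => (h a b).trans_eq (mul_comm _ _)) X Y
end

section
/- Let L be a finite distributive lattice, μ : L → ℝ≥0 a log-supermodular function (i.e., μ(x)μ(y) ≤ μ(x∨y)μ(x∧y) for all x, y), and f, g : L → ℝ≥0 both monotone increasing (or both decreasing). Then (∑_x f(x)μ(x))(∑_x g(x)μ(x)) ≤ (∑_x μ(x))(∑_x f(x)g(x)μ(x)). -/
/-!
The increasing case is Mathlib's `fkg`, a consequence of the Ahlswede–Daykin four functions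
theorem. The decreasing case is the increasing case on the order dual, where `f` and `g`
become monotone while meets and joins swap, which leaves log-supermodularity of `μ` unchanged.
-/

section FKG

variable {α β : Type*} [DistribLattice α] [Fintype α] [CommSemiring β] [LinearOrder β]
  [IsStrictOrderedRing β] [ExistsAddOfLE β] {μ f g : α → β}

lemma fkg_of_monotone (hμ : ∀ x, 0 ≤ μ x) (hf : ∀ x, 0 ≤ f x) (hg : ∀ x, 0 ≤ g x)
    (hlsm : ∀ x y, μ x * μ y ≤ μ (x ⊔ y) * μ (x ⊓ y)) (hfm : Monotone f) (hgm : Monotone g) :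
    (∑ x, f x * μ x) * (∑ x, g x * μ x) ≤ (∑ x, μ x) * ∑ x, f x * g x * μ x := by
  have h := fkg f g μ hμ hf hg hfm hgm fun x y ↦ (hlsm x y).trans_eq (mul_comm _ _)
  simpa only [mul_comm (μ _)] using h

lemma fkg_of_antitone (hμ : ∀ x, 0 ≤ μ x) (hf : ∀ x, 0 ≤ f x) (hg : ∀ x, 0 ≤ g x)
    (hlsm : ∀ x y, μ x * μ y ≤ μ (x ⊔ y) * μ (x ⊓ y)) (hfa : Antitone f) (hga : Antitone g) :
    (∑ x, f x * μ x) * (∑ x, g x * μ x) ≤ (∑ x, μ x) * ∑ x, f x * g x * μ x :=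
  fkg_of_monotone (α := αᵒᵈ) (μ := μ ∘ OrderDual.ofDual) (fun _ ↦ hμ _) (fun _ ↦ hf _)
    (fun _ ↦ hg _) (fun _ _ ↦ (hlsm _ _).trans_eq (mul_comm _ _)) hfa.dual_left hga.dual_left

end FKG

/-- The FKG inequality on a finite distributive lattice. -/
theorem fkg_inequality (L : Type*) [DistribLattice L] [Fintype L]
    (μ f g : L → ℝ)
    (hμ : ∀ x, 0 ≤ μ x) (hf : ∀ x, 0 ≤ f x) (hg : ∀ x, 0 ≤ g x)
    (hlsm : ∀ x y : L, μ x * μ y ≤ μ (x ⊔ y) * μ (x ⊓ y))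
    (hmono : (Monotone f ∧ Monotone g) ∨ (Antitone f ∧ Antitone g)) :
    (∑ x : L, f x * μ x) * (∑ x : L, g x * μ x) ≤
      (∑ x : L, μ x) * (∑ x : L, f x * g x * μ x) := by
  rcases hmono with ⟨hfm, hgm⟩ | ⟨hfa, hga⟩
  · exact fkg_of_monotone hμ hf hg hlsm hfm hgm
  · exact fkg_of_antitone hμ hf hg hlsm hfa hga
end

section
/- Let α, β, γ, δ be functions from the power set of [n] to ℝ≥0 satisfying α(A)β(B) ≤ γ(A∪B)δ(A∩B) for every A, B ⊆ [n]. Then the polynomial (∑_C γ(C)q^{|C|})(∑_D δ(D)q^{|D|}) − (∑_A α(A)q^{|A|})(∑_B β(B)q^{|B|}) in q has all coefficients non-negative; equivalently, for every k, ∑_{|A|+|B|=k} α(A)β(B) ≤ ∑_{|C|+|D|=k} γ(C)δ(D). -/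
open Polynomial

open Finset in
private lemma q4_local (n : ℕ) (α β γ δ : Finset (Fin n) → ℝ)
    (hα : ∀ A, 0 ≤ α A) (hβ : ∀ A, 0 ≤ β A) (hγ : ∀ A, 0 ≤ γ A) (hδ : ∀ A, 0 ≤ δ A)
    (h : ∀ A B : Finset (Fin n), α A * β B ≤ γ (A ∪ B) * δ (A ∩ B))
    (I W : Finset (Fin n)) :
    ∑ S ∈ W.powerset, α (I ∪ S) * β (I ∪ (W \ S)) ≤
      ∑ S ∈ W.powerset, γ (I ∪ S) * δ (I ∪ (W \ S)) := by
  set f₁ : Finset (Fin n) → ℝ := fun S => α (I ∪ S) * β (I ∪ (W \ S)) with hf₁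
  set f₂ : Finset (Fin n) → ℝ := fun T => α (I ∪ (W \ T)) * β (I ∪ T) with hf₂
  set f₃ : Finset (Fin n) → ℝ := fun Q => γ (I ∪ (W \ Q)) * δ (I ∪ Q) with hf₃
  set f₄ : Finset (Fin n) → ℝ := fun P => γ (I ∪ P) * δ (I ∪ (W \ P)) with hf₄
  have hyp : ∀ ⦃s : Finset (Fin n)⦄, s ⊆ W → ∀ ⦃t : Finset (Fin n)⦄, t ⊆ W →
      f₁ s * f₂ t ≤ f₃ (s ∩ t) * f₄ (s ∪ t) := by
    intro s hs t ht
    have e1 : (I ∪ s) ∪ (I ∪ t) = I ∪ (s ∪ t) := by ext x; simp [Finset.mem_union]; tauto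
    have e2 : (I ∪ s) ∩ (I ∪ t) = I ∪ (s ∩ t) := by
      ext x; simp [Finset.mem_union, Finset.mem_inter]; tauto
    have e3 : (I ∪ (W \ t)) ∪ (I ∪ (W \ s)) = I ∪ (W \ (s ∩ t)) := by
      ext x; simp [Finset.mem_union, Finset.mem_sdiff, Finset.mem_inter]; tauto
    have e4 : (I ∪ (W \ t)) ∩ (I ∪ (W \ s)) = I ∪ (W \ (s ∪ t)) := by
      ext x; simp [Finset.mem_union, Finset.mem_sdiff, Finset.mem_inter]; tauto
    calc f₁ s * f₂ t
        = (α (I ∪ s) * β (I ∪ t)) * (α (I ∪ (W \ t)) * β (I ∪ (W \ s))) := by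
          simp only [hf₁, hf₂]; ring
      _ ≤ (γ ((I ∪ s) ∪ (I ∪ t)) * δ ((I ∪ s) ∩ (I ∪ t))) *
            (γ ((I ∪ (W \ t)) ∪ (I ∪ (W \ s))) * δ ((I ∪ (W \ t)) ∩ (I ∪ (W \ s)))) := by
          apply mul_le_mul (h _ _) (h _ _) (mul_nonneg (hα _) (hβ _))
            (mul_nonneg (hγ _) (hδ _))
      _ = f₃ (s ∩ t) * f₄ (s ∪ t) := by
          rw [e1, e2, e3, e4]; simp only [hf₃, hf₄]; ring
  have h4 := Finset.four_functions_theorem W (f₁ := f₁) (f₂ := f₂) (f₃ := f₃) (f₄ := f₄)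
    (fun S => mul_nonneg (hα _) (hβ _)) (fun S => mul_nonneg (hα _) (hβ _))
    (fun S => mul_nonneg (hγ _) (hδ _)) (fun S => mul_nonneg (hγ _) (hδ _))
    hyp (Finset.Subset.refl W.powerset) (Finset.Subset.refl W.powerset)
  rw [Finset.powerset_infs_powerset_self, Finset.powerset_sups_powerset_self] at h4
  have e2 : ∑ T ∈ W.powerset, f₂ T = ∑ S ∈ W.powerset, f₁ S := by
    refine Finset.sum_nbij' (i := fun T => W \ T) (j := fun S => W \ S) ?_ ?_ ?_ ?_ ?_
    · intro T hT; simp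
    · intro S hS; simp
    · intro T hT; rw [Finset.mem_powerset] at hT; exact Finset.sdiff_sdiff_eq_self hT
    · intro S hS; rw [Finset.mem_powerset] at hS; exact Finset.sdiff_sdiff_eq_self hS
    · intro T hT; rw [Finset.mem_powerset] at hT
      simp only [hf₁, hf₂, Finset.sdiff_sdiff_eq_self hT]
  have e3 : ∑ Q ∈ W.powerset, f₃ Q = ∑ S ∈ W.powerset, f₄ S := by
    refine Finset.sum_nbij' (i := fun T => W \ T) (j := fun S => W \ S) ?_ ?_ ?_ ?_ ?_
    · intro T hT; simp
    · intro S hS; simp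
    · intro T hT; rw [Finset.mem_powerset] at hT; exact Finset.sdiff_sdiff_eq_self hT
    · intro S hS; rw [Finset.mem_powerset] at hS; exact Finset.sdiff_sdiff_eq_self hS
    · intro T hT; rw [Finset.mem_powerset] at hT
      simp only [hf₃, hf₄, Finset.sdiff_sdiff_eq_self hT]
  rw [e2, e3] at h4
  set L := ∑ S ∈ W.powerset, f₁ S with hL
  set R := ∑ S ∈ W.powerset, f₄ S with hR
  have hL0 : 0 ≤ L := Finset.sum_nonneg fun S _ => mul_nonneg (hα _) (hβ _)
  have hR0 : 0 ≤ R := Finset.sum_nonneg fun S _ => mul_nonneg (hγ _) (hδ _)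
  show L ≤ R
  nlinarith [h4, hL0, hR0]

open Finset in
private lemma q4_restructure (n k : ℕ) (f : Finset (Fin n) → Finset (Fin n) → ℝ) :
    ∑ p ∈ (Finset.univ ×ˢ Finset.univ).filter
        (fun p : Finset (Fin n) × Finset (Fin n) => p.1.card + p.2.card = k), f p.1 p.2 =
    ∑ q ∈ (Finset.univ ×ˢ Finset.univ).filter
        (fun q : Finset (Fin n) × Finset (Fin n) => q.1 ⊆ q.2 ∧ q.1.card + q.2.card = k),
      ∑ S ∈ (q.2 \ q.1).powerset, f (q.1 ∪ S) (q.1 ∪ ((q.2 \ q.1) \ S)) := by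
  rw [Finset.sum_sigma']
  refine Finset.sum_nbij'
    (i := fun p => ⟨(p.1 ∩ p.2, p.1 ∪ p.2), p.1 \ p.2⟩)
    (j := fun x => (x.1.1 ∪ x.2, x.1.1 ∪ ((x.1.2 \ x.1.1) \ x.2))) ?_ ?_ ?_ ?_ ?_
  · rintro ⟨A, B⟩ hp
    simp only [Finset.mem_filter, Finset.mem_product, Finset.mem_univ, true_and] at hp
    simp only [Finset.mem_sigma, Finset.mem_filter, Finset.mem_product, Finset.mem_univ,
      true_and, Finset.mem_powerset]
    refine ⟨⟨Finset.inter_subset_union, ?_⟩, ?_⟩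
    · rw [Finset.card_inter_add_card_union]; exact hp
    · intro x hx; simp only [Finset.mem_sdiff, Finset.mem_inter, Finset.mem_union] at *; tauto
  · rintro ⟨⟨I, U⟩, S⟩ hx
    simp only [Finset.mem_sigma, Finset.mem_filter, Finset.mem_product, Finset.mem_univ,
      true_and, Finset.mem_powerset] at hx
    obtain ⟨⟨hIU, hcard⟩, hS⟩ := hx
    simp only [Finset.mem_filter, Finset.mem_product, Finset.mem_univ, true_and]
    have hd1 : Disjoint I S := by
      refine Finset.disjoint_left.2 fun x hxI hxS => ?_
      have := hS hxS; simp only [Finset.mem_sdiff] at this; exact this.2 hxI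
    have hd2 : Disjoint I ((U \ I) \ S) := by
      refine Finset.disjoint_left.2 fun x hxI hxW => ?_
      simp only [Finset.mem_sdiff] at hxW; exact hxW.1.2 hxI
    rw [Finset.card_union_of_disjoint hd1, Finset.card_union_of_disjoint hd2,
      Finset.card_sdiff_of_subset hS, Finset.card_sdiff_of_subset hIU]
    have h1 : S.card ≤ (U \ I).card := Finset.card_le_card hS
    have h2 : I.card ≤ U.card := Finset.card_le_card hIU
    rw [Finset.card_sdiff_of_subset hIU] at h1
    omega
  · rintro ⟨A, B⟩ hp
    simp only [Prod.mk.injEq]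
    constructor
    · ext x; simp only [Finset.mem_union, Finset.mem_inter, Finset.mem_sdiff]; tauto
    · ext x; simp only [Finset.mem_union, Finset.mem_inter, Finset.mem_sdiff]; tauto
  · rintro ⟨⟨I, U⟩, S⟩ hx
    simp only [Finset.mem_sigma, Finset.mem_filter, Finset.mem_product, Finset.mem_univ,
      true_and, Finset.mem_powerset] at hx
    obtain ⟨⟨hIU, hcard⟩, hS⟩ := hx
    have hq : ∀ x, x ∈ I → x ∈ U := fun x hx => hIU hx
    have hSx : ∀ x, x ∈ S → x ∈ U ∧ x ∉ I := fun x hx => Finset.mem_sdiff.1 (hS hx)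
    have h1 : (I ∪ S) ∩ (I ∪ ((U \ I) \ S)) = I := by
      ext x
      have hqx := hq x
      have hSxx := hSx x
      simp only [Finset.mem_inter, Finset.mem_union, Finset.mem_sdiff]
      tauto
    have h2 : (I ∪ S) ∪ (I ∪ ((U \ I) \ S)) = U := by
      ext x
      have hqx := hq x
      have hSxx := hSx x
      simp only [Finset.mem_union, Finset.mem_sdiff]
      constructor
      · intro hx; tauto
      · intro hx
        by_cases hxI : x ∈ I
        · tauto
        · by_cases hxS : x ∈ S <;> tauto
    have h3 : (I ∪ S) \ (I ∪ ((U \ I) \ S)) = S := by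
      ext x
      have hqx := hq x
      have hSxx := hSx x
      simp only [Finset.mem_sdiff, Finset.mem_union]
      tauto
    simp only [h1, h2, h3]
  · rintro ⟨A, B⟩ hp
    have h1 : (A ∩ B) ∪ (A \ B) = A := by
      ext x; simp only [Finset.mem_union, Finset.mem_inter, Finset.mem_sdiff]; tauto
    have h2 : (A ∩ B) ∪ (((A ∪ B) \ (A ∩ B)) \ (A \ B)) = B := by
      ext x; simp only [Finset.mem_union, Finset.mem_inter, Finset.mem_sdiff]; tauto
    simp only [h1, h2]

private lemma q4_coeff_eq (n k : ℕ) (f g : Finset (Fin n) → ℝ) :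
    ((∑ A : Finset (Fin n), C (f A) * X ^ A.card) *
      (∑ B : Finset (Fin n), C (g B) * X ^ B.card)).coeff k =
    ∑ p ∈ (Finset.univ ×ˢ Finset.univ).filter
        (fun p : Finset (Fin n) × Finset (Fin n) => p.1.card + p.2.card = k),
      f p.1 * g p.2 := by
  have lhs_eq : ((∑ A : Finset (Fin n), C (f A) * X ^ A.card) *
      (∑ B : Finset (Fin n), C (g B) * X ^ B.card)).coeff k
      = ∑ A : Finset (Fin n), ∑ B : Finset (Fin n),
          if A.card + B.card = k then f A * g B else 0 := by
    rw [Finset.sum_mul_sum, Polynomial.finset_sum_coeff]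
    refine Finset.sum_congr rfl fun A _ => ?_
    rw [Polynomial.finset_sum_coeff]
    refine Finset.sum_congr rfl fun B _ => ?_
    rw [mul_mul_mul_comm, ← Polynomial.C_mul, ← pow_add, Polynomial.coeff_C_mul,
      Polynomial.coeff_X_pow]
    split_ifs with h1 h2 h2 <;> first | (exfalso; omega) | ring
  rw [lhs_eq, Finset.sum_filter, Finset.sum_product]

/-- The q-analogue of the four functions theorem on the Boolean lattice. -/
theorem q_four_functions_theorem_boolean (n : ℕ) (α β γ δ : Finset (Fin n) → ℝ)
    (hα : ∀ A, 0 ≤ α A) (hβ : ∀ A, 0 ≤ β A) (hγ : ∀ A, 0 ≤ γ A) (hδ : ∀ A, 0 ≤ δ A)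
    (h : ∀ A B : Finset (Fin n), α A * β B ≤ γ (A ∪ B) * δ (A ∩ B)) :
    (∀ k : ℕ,
      ((∑ A : Finset (Fin n), C (α A) * X ^ A.card) *
        (∑ B : Finset (Fin n), C (β B) * X ^ B.card)).coeff k ≤
      ((∑ C' : Finset (Fin n), C (γ C') * X ^ C'.card) *
        (∑ D : Finset (Fin n), C (δ D) * X ^ D.card)).coeff k) ∧
    (∀ k : ℕ,
      ∑ p ∈ (Finset.univ ×ˢ Finset.univ).filter
          (fun p : Finset (Fin n) × Finset (Fin n) => p.1.card + p.2.card = k),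
        α p.1 * β p.2 ≤
      ∑ p ∈ (Finset.univ ×ˢ Finset.univ).filter
          (fun p : Finset (Fin n) × Finset (Fin n) => p.1.card + p.2.card = k),
        γ p.1 * δ p.2) := by
  have part2 : ∀ k : ℕ,
      ∑ p ∈ (Finset.univ ×ˢ Finset.univ).filter
          (fun p : Finset (Fin n) × Finset (Fin n) => p.1.card + p.2.card = k),
        α p.1 * β p.2 ≤
      ∑ p ∈ (Finset.univ ×ˢ Finset.univ).filter
          (fun p : Finset (Fin n) × Finset (Fin n) => p.1.card + p.2.card = k),
        γ p.1 * δ p.2 := by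
    intro k
    rw [q4_restructure n k (fun A B => α A * β B), q4_restructure n k (fun A B => γ A * δ B)]
    apply Finset.sum_le_sum
    intro q _
    exact q4_local n α β γ δ hα hβ hγ hδ h q.1 (q.2 \ q.1)
  refine ⟨fun k => ?_, part2⟩
  rw [q4_coeff_eq n k α β, q4_coeff_eq n k γ δ]
  exact part2 k
end

section
/- Let α, β, γ, δ be functions from the power set of [n] to ℝ≥0 satisfying α(A)β(B) ≤ γ(A∪B)δ(A∩B) for every A, B ⊆ [n]. Then ∑_{A⊆[n]} α(A)β(Aᶜ) ≤ ∑_{C⊆[n]} γ(C)δ(Cᶜ), where Aᶜ denotes the complement of A in [n]. -/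
/-- The complementary-sum strengthening of the four functions theorem. -/
theorem complementary_four_functions (n : ℕ) (α β γ δ : Finset (Fin n) → ℝ)
    (hα : ∀ A, 0 ≤ α A) (hβ : ∀ A, 0 ≤ β A) (hγ : ∀ A, 0 ≤ γ A) (hδ : ∀ A, 0 ≤ δ A)
    (h : ∀ A B : Finset (Fin n), α A * β B ≤ γ (A ∪ B) * δ (A ∩ B)) :
    ∑ A : Finset (Fin n), α A * β Aᶜ ≤ ∑ C : Finset (Fin n), γ C * δ Cᶜ := by
  classical
  set F : Finset (Fin n) → ℝ := fun A => α A * β Aᶜ with hF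
  set G : Finset (Fin n) → ℝ := fun B => α Bᶜ * β B with hG
  set H : Finset (Fin n) → ℝ := fun C => γ C * δ Cᶜ with hH
  set K : Finset (Fin n) → ℝ := fun D => γ Dᶜ * δ D with hK
  have hFG : ∀ a b : Finset (Fin n), F a * G b ≤ K (a ⊓ b) * H (a ⊔ b) := by
    intro a b
    have h1 : α a * β b ≤ γ (a ∪ b) * δ (a ∩ b) := h a b
    have h2 : α bᶜ * β aᶜ ≤ γ (bᶜ ∪ aᶜ) * δ (bᶜ ∩ aᶜ) := h bᶜ aᶜ
    have e1 : bᶜ ∪ aᶜ = (a ∩ b)ᶜ := by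
      rw [Finset.compl_inter]; exact Finset.union_comm _ _
    have e2 : bᶜ ∩ aᶜ = (a ∪ b)ᶜ := by
      rw [Finset.compl_union]; exact Finset.inter_comm _ _
    rw [e1, e2] at h2
    have key : (α a * β b) * (α bᶜ * β aᶜ) ≤
        (γ (a ∪ b) * δ (a ∩ b)) * (γ ((a ∩ b)ᶜ) * δ ((a ∪ b)ᶜ)) :=
      mul_le_mul h1 h2 (mul_nonneg (hα _) (hβ _))
        (mul_nonneg (hγ _) (hδ _))
    calc F a * G b = (α a * β b) * (α bᶜ * β aᶜ) := by
          simp only [hF, hG]; ring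
      _ ≤ (γ (a ∪ b) * δ (a ∩ b)) * (γ ((a ∩ b)ᶜ) * δ ((a ∪ b)ᶜ)) := key
      _ = K (a ∩ b) * H (a ∪ b) := by simp only [hK, hH]; ring
      _ = K (a ⊓ b) * H (a ⊔ b) := by
          rw [Finset.inf_eq_inter, Finset.sup_eq_union]
  have hF0 : (0 : Finset (Fin n) → ℝ) ≤ F := fun A => mul_nonneg (hα _) (hβ _)
  have hG0 : (0 : Finset (Fin n) → ℝ) ≤ G := fun A => mul_nonneg (hα _) (hβ _)
  have hH0 : (0 : Finset (Fin n) → ℝ) ≤ H := fun A => mul_nonneg (hγ _) (hδ _)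
  have hK0 : (0 : Finset (Fin n) → ℝ) ≤ K := fun A => mul_nonneg (hγ _) (hδ _)
  have main := four_functions_theorem_univ F G K H hF0 hG0 hK0 hH0 hFG
  have hGF : ∑ a, G a = ∑ a, F a := by
    refine Fintype.sum_equiv (Function.Involutive.toPerm _ (fun s : Finset (Fin n) => compl_compl s)) _ _ ?_
    intro a
    simp [hF, hG, Function.Involutive.toPerm]
  have hKH : ∑ a, K a = ∑ a, H a := by
    refine Fintype.sum_equiv (Function.Involutive.toPerm _ (fun s : Finset (Fin n) => compl_compl s)) _ _ ?_
    intro a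
    simp [hH, hK, Function.Involutive.toPerm, mul_comm]
  rw [hGF, hKH] at main
  have hFnn : 0 ≤ ∑ a, F a := Finset.sum_nonneg fun a _ => hF0 a
  have hHnn : 0 ≤ ∑ a, H a := Finset.sum_nonneg fun a _ => hH0 a
  nlinarith [main, hFnn, hHnn]
end

section
/- Let α, β, γ, δ be functions from the power set of [n] to ℝ≥0 satisfying α(A)β(B) ≤ γ(B∖A)δ(A∖B) for every A, B ⊆ [n]. Then (∑_{A⊆[n]} α(A))(∑_{B⊆[n]} β(B)) ≤ (∑_{C⊆[n]} γ(C))(∑_{D⊆[n]} δ(D)). -/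
/-- The set-difference variant of the four functions theorem. -/
theorem four_functions_sdiff (n : ℕ) (α β γ δ : Finset (Fin n) → ℝ)
    (hα : ∀ A, 0 ≤ α A) (hβ : ∀ A, 0 ≤ β A) (hγ : ∀ A, 0 ≤ γ A) (hδ : ∀ A, 0 ≤ δ A)
    (h : ∀ A B : Finset (Fin n), α A * β B ≤ γ (B \ A) * δ (A \ B)) :
    (∑ A : Finset (Fin n), α A) * (∑ B : Finset (Fin n), β B) ≤
      (∑ C : Finset (Fin n), γ C) * (∑ D : Finset (Fin n), δ D) := by
  have key := four_functions_theorem_univ α (fun B => β Bᶜ) δ (fun X => γ Xᶜ)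
    hα (fun B => hβ _) hδ (fun X => hγ _) (fun A B => by
      have := h A Bᶜ
      have h1 : Bᶜ \ A = (A ⊔ B)ᶜ := by
        ext x; simp [Finset.mem_sdiff, Finset.mem_compl, and_comm]
      have h2 : A \ Bᶜ = A ⊓ B := by
        ext x; simp [Finset.mem_sdiff, Finset.mem_compl]
      rw [h1, h2] at this
      linarith)
  have e1 : (∑ B : Finset (Fin n), β Bᶜ) = ∑ B : Finset (Fin n), β B :=
    Fintype.sum_equiv ((Function.Involutive.toPerm _ (fun X : Finset (Fin n) => compl_compl X))) _ _ (fun _ => rfl)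
  have e2 : (∑ X : Finset (Fin n), γ Xᶜ) = ∑ X : Finset (Fin n), γ X :=
    Fintype.sum_equiv ((Function.Involutive.toPerm _ (fun X : Finset (Fin n) => compl_compl X))) _ _ (fun _ => rfl)
  rw [e1, e2] at key
  linarith
end

section
/- There exist n and functions α, β, γ, δ from the power set of [n] to ℝ≥0 satisfying α(A)β(B) ≤ γ(A∪B)δ(A∩B) for all A, B ⊆ [n], together with sets A, B ⊆ [n], such that α(A)β(B) + α(B)β(A) > γ(A)δ(B) + γ(B)δ(A). -/
def f1 : Finset (Fin 2) → ℕ := fun S => if S = {1} then 1 else 0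
def f2 : Finset (Fin 2) → ℕ := fun S => if S = Finset.univ then 0 else 1
def f3 : Finset (Fin 2) → ℕ := fun S => if (1 : Fin 2) ∈ S then 1 else 0
def f4 : Finset (Fin 2) → ℕ := fun S => if (0 : Fin 2) ∈ S then 0 else 1

/-- Counterexample to the pairwise strengthening of the four functions theorem. -/
theorem pairwise_four_functions_fails :
    ∃ (n : ℕ) (α β γ δ : Finset (Fin n) → ℝ),
      (∀ A, 0 ≤ α A) ∧ (∀ A, 0 ≤ β A) ∧ (∀ A, 0 ≤ γ A) ∧ (∀ A, 0 ≤ δ A) ∧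
      (∀ A B : Finset (Fin n), α A * β B ≤ γ (A ∪ B) * δ (A ∩ B)) ∧
      ∃ A B : Finset (Fin n),
        γ A * δ B + γ B * δ A < α A * β B + α B * β A := by
  refine ⟨2, fun S => (f1 S : ℝ), fun S => (f2 S : ℝ), fun S => (f3 S : ℝ),
    fun S => (f4 S : ℝ), fun A => by positivity, fun A => by positivity,
    fun A => by positivity, fun A => by positivity, ?_, {0}, {1}, ?_⟩
  · intro A B
    push_cast [← Nat.cast_mul]
    exact_mod_cast (by revert A B; decide : ∀ A B : Finset (Fin 2),
      f1 A * f2 B ≤ f3 (A ∪ B) * f4 (A ∩ B)) A B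
  · push_cast [← Nat.cast_mul, ← Nat.cast_add]
    exact_mod_cast (by decide : f3 {0} * f4 {1} + f3 {1} * f4 {0} <
      f1 {0} * f2 {1} + f1 {1} * f2 {0})
end

section
/- The hypothetical inequality α(A)β(B) + α(B)β(A) ≤ γ(A)δ(B) + γ(B)δ(A) (under the hypothesis α(A)β(B) ≤ γ(A∪B)δ(A∩B) for all A, B) does hold for all α, β, γ, δ : 𝒫([1]) → ℝ≥0 and all A, B ⊆ [1], i.e., in the case n = 1. -/
lemma aux_uvxy (u v x y : ℝ) (hu : 0 ≤ u) (hv : 0 ≤ v) (hx : 0 ≤ x) (hy : 0 ≤ y)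
    (h1 : u ≤ y) (h2 : v ≤ y) (h3 : u * v ≤ x * y) : u + v ≤ x + y := by
  rcases eq_or_lt_of_le hy with h | h
  · nlinarith
  · nlinarith [mul_nonneg (sub_nonneg.2 h1) (sub_nonneg.2 h2)]

/-- The pairwise strengthening of the four functions theorem holds for n = 1. -/
theorem pairwise_four_functions_n_one (α β γ δ : Finset (Fin 1) → ℝ)
    (hα : ∀ A, 0 ≤ α A) (hβ : ∀ A, 0 ≤ β A) (hγ : ∀ A, 0 ≤ γ A) (hδ : ∀ A, 0 ≤ δ A)
    (h : ∀ A B : Finset (Fin 1), α A * β B ≤ γ (A ∪ B) * δ (A ∩ B)) :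
    ∀ A B : Finset (Fin 1),
      α A * β B + α B * β A ≤ γ A * δ B + γ B * δ A := by
  have key : ∀ A : Finset (Fin 1), A = ∅ ∨ A = {0} := by decide
  have mixed : α ∅ * β {0} + α {0} * β ∅ ≤ γ ∅ * δ {0} + γ {0} * δ ∅ := by
    have h1 := h ∅ {0}
    have h2 := h {0} ∅
    have h3 := h ∅ ∅
    have h4 := h ({0} : Finset (Fin 1)) {0}
    simp at h1 h2 h3 h4
    exact aux_uvxy _ _ _ _ (mul_nonneg (hα _) (hβ _)) (mul_nonneg (hα _) (hβ _))
      (mul_nonneg (hγ _) (hδ _)) (mul_nonneg (hγ _) (hδ _)) h1 h2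
      (by nlinarith [mul_nonneg (hγ ∅) (hδ ∅), mul_nonneg (hγ {0}) (hδ {0}),
        mul_nonneg (hα ∅) (hβ ∅), mul_nonneg (hα {0}) (hβ {0})])
  intro A B
  have hd : ∀ C : Finset (Fin 1), α C * β C + α C * β C ≤ γ C * δ C + γ C * δ C := by
    intro C
    have := h C C
    simp at this
    linarith
  rcases key A with rfl | rfl <;> rcases key B with rfl | rfl
  · exact hd ∅
  · exact mixed
  · linarith [mixed]
  · exact hd {0}
end

section
/- The q-analogue of the four functions theorem on the Boolean lattice (Theorem: under α(A)β(B) ≤ γ(A∪B)δ(A∩B), for each k, ∑_{|A|+|B|=k} α(A)β(B) ≤ ∑_{|C|+|D|=k} γ(C)δ(D)) follows from its top-coefficient case: the statement that under the same hypotheses (on 𝒫(G∖F) for each F ⊆ G), ∑_A α(A)β(Aᶜ) ≤ ∑_C γ(C)δ(Cᶜ). Formally: assume that for every finite set S and all α', β', γ', δ' : 𝒫(S) → ℝ≥0 with α'(A)β'(B) ≤ γ'(A∪B)δ'(A∩B), one has ∑_{A⊆S} α'(A)β'(S∖A) ≤ ∑_{C⊆S} γ'(C)δ'(S∖C). Then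 for all α, β, γ, δ : 𝒫([n]) → ℝ≥0 with α(A)β(B) ≤ γ(A∪B)δ(A∩B), and every k, ∑_{|A|+|B|=k} α(A)β(B) ≤ ∑_{|C|+|D|=k} γ(C)δ(D). -/
open Finset

section aux

variable {n : ℕ} (F G : Finset (Fin n))

private abbrev lift (X : Finset {x : Fin n // x ∈ G \ F}) : Finset (Fin n) :=
  X.map (Function.Embedding.subtype _)

private lemma lift_univ : lift F G Finset.univ = G \ F := by
  ext x
  simp only [lift, Finset.mem_map, Function.Embedding.coe_subtype, Finset.mem_univ, true_and]
  constructor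
  · rintro ⟨⟨y, hy⟩, rfl⟩; exact hy
  · intro hx; exact ⟨⟨x, hx⟩, rfl⟩

private lemma lift_subset (X : Finset {x : Fin n // x ∈ G \ F}) : lift F G X ⊆ G \ F := by
  intro x hx
  simp only [lift, Finset.mem_map, Function.Embedding.coe_subtype] at hx
  obtain ⟨⟨y, hy⟩, _, rfl⟩ := hx
  exact hy

private lemma lift_compl (X : Finset {x : Fin n // x ∈ G \ F}) :
    lift F G Xᶜ = (G \ F) \ lift F G X := by
  ext x
  simp only [lift, Finset.mem_map, Function.Embedding.coe_subtype, Finset.mem_sdiff,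
    Finset.mem_compl]
  constructor
  · rintro ⟨⟨y, hy⟩, hmem, rfl⟩
    refine ⟨Finset.mem_sdiff.1 hy, ?_⟩
    rintro ⟨a, ha, haa⟩
    exact hmem (by rwa [show a = ⟨y, hy⟩ from Subtype.ext haa] at ha)
  · rintro ⟨hx, hnot⟩
    refine ⟨⟨x, Finset.mem_sdiff.2 hx⟩, ?_, rfl⟩
    intro h
    exact hnot ⟨⟨x, Finset.mem_sdiff.2 hx⟩, h, rfl⟩

private lemma lift_union (X Y : Finset {x : Fin n // x ∈ G \ F}) :
    lift F G (X ∪ Y) = lift F G X ∪ lift F G Y :=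
  Finset.map_union X Y

private lemma lift_inter (X Y : Finset {x : Fin n // x ∈ G \ F}) :
    lift F G (X ∩ Y) = lift F G X ∩ lift F G Y :=
  Finset.map_inter X Y

private lemma recover (A B : Finset (Fin n)) (hI : A ∩ B = F) (hU : A ∪ B = G) :
    F ∪ lift F G (A.subtype (· ∈ G \ F)) = A ∧
      F ∪ lift F G (A.subtype (· ∈ G \ F))ᶜ = B := by
  have hA1 : F ⊆ A := hI ▸ Finset.inter_subset_left
  have hA2 : A ⊆ G := hU ▸ Finset.subset_union_left
  have hB1 : F ⊆ B := hI ▸ Finset.inter_subset_right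
  have hlift : lift F G (A.subtype (· ∈ G \ F)) = A ∩ (G \ F) := by
    rw [lift, Finset.subtype_map]
    ext x; simp [Finset.mem_filter, and_comm]
  constructor
  · rw [hlift]
    ext x
    simp only [Finset.mem_union, Finset.mem_inter, Finset.mem_sdiff]
    constructor
    · rintro (h | ⟨h, -⟩)
      · exact hA1 h
      · exact h
    · intro h
      by_cases hxF : x ∈ F
      · exact Or.inl hxF
      · exact Or.inr ⟨h, hA2 h, hxF⟩
  · rw [lift_compl, hlift]
    ext x
    simp only [Finset.mem_union, Finset.mem_sdiff, Finset.mem_inter]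
    constructor
    · rintro (h | ⟨⟨hxG, hxF⟩, hx⟩)
      · exact hB1 h
      · have hxA : x ∉ A := fun hxA => hx ⟨hxA, hxG, hxF⟩
        have : x ∈ A ∪ B := hU ▸ hxG
        rcases Finset.mem_union.1 this with h' | h'
        · exact absurd h' hxA
        · exact h'
    · intro hxB
      by_cases hxF : x ∈ F
      · exact Or.inl hxF
      · have hxG : x ∈ G := hU ▸ Finset.mem_union.2 (Or.inr hxB)
        have hxA : x ∉ A := fun hxA => hxF (hI ▸ Finset.mem_inter.2 ⟨hxA, hxB⟩)
        exact Or.inr ⟨⟨hxG, hxF⟩, fun ⟨h', _⟩ => hxA h'⟩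

/-- Fiber reindexing: pairs (A,B) with A∩B = F, A∪B = G correspond to
subsets X of G\F via A = F ∪ X, B = F ∪ Xᶜ. -/
private lemma fiber_sum (hFG : F ⊆ G) (k : ℕ) (hk : F.card + G.card = k)
    (f : Finset (Fin n) → Finset (Fin n) → ℝ) :
    ∑ p ∈ (((Finset.univ ×ˢ Finset.univ).filter
        (fun p : Finset (Fin n) × Finset (Fin n) => p.1.card + p.2.card = k)).filter
        (fun p => (p.1 ∩ p.2, p.1 ∪ p.2) = (F, G))),
      f p.1 p.2
    = ∑ X : Finset {x : Fin n // x ∈ G \ F},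
        f (F ∪ lift F G X) (F ∪ lift F G Xᶜ) := by
  apply Finset.sum_nbij' (i := fun p => p.1.subtype (· ∈ G \ F))
    (j := fun X => (F ∪ lift F G X, F ∪ lift F G Xᶜ))
  · intro p hp
    exact Finset.mem_univ _
  · intro X _
    simp only [Finset.mem_filter, Finset.mem_product, Finset.mem_univ, true_and, Prod.mk.injEq]
    have hinter : (F ∪ lift F G X) ∩ (F ∪ lift F G Xᶜ) = F := by
      rw [← Finset.union_inter_distrib_left, ← lift_inter, inter_compl]
      simp [lift]
    have hunion : (F ∪ lift F G X) ∪ (F ∪ lift F G Xᶜ) = G := by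
      rw [Finset.union_union_union_comm, Finset.union_self, ← lift_union, union_compl,
        lift_univ, Finset.union_sdiff_of_subset hFG]
    refine ⟨?_, hinter, hunion⟩
    have := Finset.card_inter_add_card_union (F ∪ lift F G X) (F ∪ lift F G Xᶜ)
    rw [hinter, hunion] at this
    omega
  · intro p hp
    simp only [Finset.mem_filter, Finset.mem_product, Prod.mk.injEq] at hp
    obtain ⟨-, hI, hU⟩ := hp
    obtain ⟨h1, h2⟩ := recover F G p.1 p.2 hI hU
    exact Prod.ext h1 h2
  · intro X _
    have hXsub := lift_subset F G X
    have hdisj : Disjoint F (G \ F) := Finset.disjoint_sdiff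
    apply Finset.map_injective (Function.Embedding.subtype (· ∈ G \ F))
    rw [Finset.subtype_map]
    ext x
    simp only [Finset.mem_filter, Finset.mem_union]
    constructor
    · rintro ⟨h | h, hx⟩
      · exact absurd hx (Finset.disjoint_left.1 hdisj h)
      · exact h
    · intro h
      exact ⟨Or.inr h, hXsub h⟩
  · intro p hp
    simp only [Finset.mem_filter, Finset.mem_product, Prod.mk.injEq] at hp
    obtain ⟨-, hI, hU⟩ := hp
    obtain ⟨h1, h2⟩ := recover F G p.1 p.2 hI hU
    rw [h1, h2]

end aux

/-- The q-analogue of the four functions theorem on the Boolean lattice follows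
from its top-coefficient (complementary-sum) case. -/
theorem q_four_functions_of_complementary
    (H : ∀ (S : Type) [Fintype S] [DecidableEq S] (α' β' γ' δ' : Finset S → ℝ),
      (∀ A, 0 ≤ α' A) → (∀ A, 0 ≤ β' A) → (∀ A, 0 ≤ γ' A) → (∀ A, 0 ≤ δ' A) →
      (∀ A B : Finset S, α' A * β' B ≤ γ' (A ∪ B) * δ' (A ∩ B)) →
      ∑ A : Finset S, α' A * β' Aᶜ ≤ ∑ C : Finset S, γ' C * δ' Cᶜ) :
    ∀ (n : ℕ) (α β γ δ : Finset (Fin n) → ℝ),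
      (∀ A, 0 ≤ α A) → (∀ A, 0 ≤ β A) → (∀ A, 0 ≤ γ A) → (∀ A, 0 ≤ δ A) →
      (∀ A B : Finset (Fin n), α A * β B ≤ γ (A ∪ B) * δ (A ∩ B)) →
      ∀ k : ℕ,
        ∑ p ∈ (Finset.univ ×ˢ Finset.univ).filter
            (fun p : Finset (Fin n) × Finset (Fin n) => p.1.card + p.2.card = k),
          α p.1 * β p.2 ≤
        ∑ p ∈ (Finset.univ ×ˢ Finset.univ).filter
            (fun p : Finset (Fin n) × Finset (Fin n) => p.1.card + p.2.card = k),
          γ p.1 * δ p.2 := by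
  intro n α β γ δ hα hβ hγ hδ hyp k
  classical
  set s := (Finset.univ ×ˢ Finset.univ).filter
      (fun p : Finset (Fin n) × Finset (Fin n) => p.1.card + p.2.card = k) with hs
  set key : Finset (Fin n) × Finset (Fin n) → Finset (Fin n) × Finset (Fin n) :=
      fun p => (p.1 ∩ p.2, p.1 ∪ p.2) with hkey
  rw [← Finset.sum_fiberwise_of_maps_to (g := key) (t := s.image key)
      (fun p hp => Finset.mem_image_of_mem key hp) (fun p => α p.1 * β p.2),
    ← Finset.sum_fiberwise_of_maps_to (g := key) (t := s.image key)
      (fun p hp => Finset.mem_image_of_mem key hp) (fun p => γ p.1 * δ p.2)]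
  apply Finset.sum_le_sum
  intro g hg
  obtain ⟨p, hp, hpg⟩ := Finset.mem_image.1 hg
  rw [hs, Finset.mem_filter] at hp
  obtain ⟨-, hcard⟩ := hp
  obtain ⟨F, G⟩ := g
  have hFG : F ⊆ G := by
    have : p.1 ∩ p.2 = F ∧ p.1 ∪ p.2 = G := by
      simpa [hkey, Prod.ext_iff] using hpg
    rw [← this.1, ← this.2]
    exact Finset.inter_subset_union
  have hk : F.card + G.card = k := by
    have : p.1 ∩ p.2 = F ∧ p.1 ∪ p.2 = G := by
      simpa [hkey, Prod.ext_iff] using hpg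
    rw [← this.1, ← this.2, Finset.card_inter_add_card_union]
    exact hcard
  have hfib : ∀ p' : Finset (Fin n) × Finset (Fin n),
      (key p' = (F, G)) = ((p'.1 ∩ p'.2, p'.1 ∪ p'.2) = (F, G)) := fun _ => rfl
  calc ∑ q ∈ s.filter (fun q => key q = (F, G)), α q.1 * β q.2
      = ∑ X : Finset {x : Fin n // x ∈ G \ F},
          α (F ∪ lift F G X) * β (F ∪ lift F G Xᶜ) := by
        rw [hs]; exact fiber_sum F G hFG k hk (fun A B => α A * β B)
    _ ≤ ∑ X : Finset {x : Fin n // x ∈ G \ F},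
          γ (F ∪ lift F G X) * δ (F ∪ lift F G Xᶜ) := by
        apply H _ (fun X => α (F ∪ lift F G X)) (fun X => β (F ∪ lift F G X))
          (fun X => γ (F ∪ lift F G X)) (fun X => δ (F ∪ lift F G X))
          (fun _ => hα _) (fun _ => hβ _) (fun _ => hγ _) (fun _ => hδ _)
        intro X Y
        have h1 : (F ∪ lift F G X) ∪ (F ∪ lift F G Y) = F ∪ lift F G (X ∪ Y) := by
          rw [lift_union, Finset.union_union_union_comm, Finset.union_self]
        have h2 : (F ∪ lift F G X) ∩ (F ∪ lift F G Y) = F ∪ lift F G (X ∩ Y) := by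
          rw [lift_inter, Finset.union_inter_distrib_left]
        calc α (F ∪ lift F G X) * β (F ∪ lift F G Y)
            ≤ γ ((F ∪ lift F G X) ∪ (F ∪ lift F G Y)) *
              δ ((F ∪ lift F G X) ∩ (F ∪ lift F G Y)) := hyp _ _
          _ = γ (F ∪ lift F G (X ∪ Y)) * δ (F ∪ lift F G (X ∩ Y)) := by rw [h1, h2]
    _ = ∑ q ∈ s.filter (fun q => key q = (F, G)), γ q.1 * δ q.2 := by
        rw [hs]; exact (fiber_sum F G hFG k hk (fun A B => γ A * δ B)).symm
end
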